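/- arXiv:2402.17088 — 2 statements merged into one kernel-verified Lean document; each statement's English description precedes it below -/
import Mathlib

section
/- If a linear program max{cᵀy : Ay ≤ d} over a nonempty bounded polyhedron attains its maximum, then the maximum is attained at a vertex of the polyhedron; consequently, if A is totally unimodular and d is integral, the LP relaxation of the corresponding 0-1 integer program has an integral optimal solution with the same optimal value. -/
/-! The maximisers of the objective form an exposed face of the compact polyhedron; by
Krein–Milman this face has an extreme point, which is then extreme in the polyhedron itself.
At an extreme point `v` no nonzero direction `w` keeps all tight constraints tight, since
otherwise `v ± ε w` would be feasible for small `ε`. Hence the tight rows have full column rank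
and contain a nonsingular square submatrix `B` with `B v = d_B`. Total unimodularity forces
`det B = ±1`, so `v = B⁻¹ d_B` is integral. -/

/-- An integer matrix is totally unimodular if every square submatrix (viewed
over `ℝ`) has determinant in {0, 1, -1}. -/
def TotallyUnimodular {m n : ℕ} (A : Matrix (Fin m) (Fin n) ℤ) : Prop :=
  ∀ (k : ℕ) (f : Fin k → Fin m) (g : Fin k → Fin n), Function.Injective f →
    Function.Injective g →
      ((A.map (Int.cast : ℤ → ℝ)).submatrix f g).det ∈ ({0, 1, -1} : Set ℝ)

open Matrix Filter Topology

theorem IsCompact.exists_mem_extremePoints_eq_of_isMaxOn {E : Type*} [AddCommGroup E]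
    [Module ℝ E] [TopologicalSpace E] [T2Space E] [IsTopologicalAddGroup E] [ContinuousSMul ℝ E]
    [LocallyConvexSpace ℝ E] {s : Set E} (hs : IsCompact s) (l : StrongDual ℝ E) {x : E}
    (hx : x ∈ s) (hmax : IsMaxOn l s x) : ∃ v ∈ s.extremePoints ℝ, l v = l x := by
  have hface : IsExposed ℝ s (l.toExposed s) := ContinuousLinearMap.toExposed.isExposed
  obtain ⟨v, hv⟩ := (hface.isCompact hs).extremePoints_nonempty ⟨x, hx, hmax⟩
  exact ⟨v, hface.isExtreme.extremePoints_subset_extremePoints hv,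
    le_antisymm (hmax hv.1.1) (hv.1.2 x hx)⟩

theorem eq_of_mem_extremePoints_of_eq_smul_add_smul {E : Type*} [AddCommGroup E]
    [Module ℝ E] {s : Set E} {v y₁ y₂ : E} (hv : v ∈ s.extremePoints ℝ) (hy₁ : y₁ ∈ s)
    (hy₂ : y₂ ∈ s) {t : ℝ} (ht₀ : 0 < t) (ht₁ : t < 1) (h : v = t • y₁ + (1 - t) • y₂) :
    y₁ = y₂ := by
  obtain ⟨h₁, h₂⟩ := (mem_extremePoints.1 hv).2 y₁ hy₁ y₂ hy₂
    ⟨t, 1 - t, ht₀, sub_pos.2 ht₁, add_sub_cancel t 1, h.symm⟩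
  exact h₁.trans h₂.symm

section Polyhedron

variable {ι σ : Type*} [Fintype σ] {M : Matrix ι σ ℝ} {b : ι → ℝ}

theorem isClosed_setOf_forall_mulVec_le : IsClosed {y | ∀ i, (M *ᵥ y) i ≤ b i} := by
  simp only [Set.ofPred_forall]
  exact isClosed_iInter fun i =>
    isClosed_le ((continuous_apply i).comp (continuous_const.matrix_mulVec continuous_id))
      continuous_const

theorem eq_zero_of_mem_extremePoints_of_forall_tight_mulVec_eq_zero [Finite ι] {v w : σ → ℝ}
    (hv : v ∈ {y | ∀ i, (M *ᵥ y) i ≤ b i}.extremePoints ℝ)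
    (hw : ∀ i, (M *ᵥ v) i = b i → (M *ᵥ w) i = 0) : w = 0 := by
  have hnear : ∀ᶠ s : ℝ in 𝓝 0, ∀ i, (M *ᵥ (v + s • w)) i ≤ b i := by
    refine eventually_all.2 fun i => ?_
    simp only [mulVec_add, mulVec_smul, Pi.add_apply, Pi.smul_apply, smul_eq_mul]
    rcases (hv.1 i).eq_or_lt with htight | hslack
    · exact .of_forall fun s => by rw [hw i htight, mul_zero, add_zero, htight]
    · have hcont : Continuous fun s : ℝ => (M *ᵥ v) i + s * (M *ᵥ w) i := by fun_prop
      exact (hcont.continuousAt.eventually_lt continuousAt_const (by simpa using hslack)).mono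
        fun _ hs => hs.le
  obtain ⟨ε, hε, hball⟩ := Metric.eventually_nhds_iff.1 hnear
  have hmid : v ∈ openSegment ℝ (v + (ε / 2) • w) (v + (-(ε / 2)) • w) :=
    ⟨1 / 2, 1 / 2, by norm_num, by norm_num, by norm_num, by module⟩
  have hends := (mem_extremePoints.1 hv).2 _ (hball (by simp [abs_of_pos hε, hε])) _
    (hball (by simp [abs_of_pos hε, hε])) hmid
  simpa [hε.ne'] using hends.1

end Polyhedron

theorem Matrix.exists_injective_det_submatrix_ne_zero {K ι σ : Type*} [Field K] [Finite ι]
    [Fintype σ] [DecidableEq σ] (M : Matrix ι σ K) (hM : ∀ w, M *ᵥ w = 0 → w = 0) :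
    ∃ f : σ → ι, Function.Injective f ∧ (M.submatrix f id).det ≠ 0 := by
  obtain ⟨κ, a, ha, hspan, hli⟩ := exists_linearIndependent' K M.row
  have : Finite κ := Finite.of_injective a ha
  have : Fintype κ := Fintype.ofFinite κ
  have hrank : M.rank = Fintype.card σ := by
    rw [Matrix.rank, LinearMap.finrank_range_of_inj, Module.finrank_fintype_fun_eq_card]
    exact LinearMap.ker_eq_bot.1 (ker_mulVecLin_eq_bot_iff.2 hM)
  have hcard : Fintype.card κ = Fintype.card σ := by
    rw [← finrank_span_eq_card hli, hspan, ← rank_eq_finrank_span_row, hrank]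
  let e : σ ≃ κ := (Fintype.equivOfCardEq hcard).symm
  refine ⟨a ∘ e, ha.comp e.injective, ?_⟩
  have : LinearIndependent K (M.submatrix (a ∘ e) id).row := hli.comp e e.injective
  exact ((isUnit_iff_isUnit_det _).1 (linearIndependent_rows_iff_isUnit.1 this)).ne_zero

theorem Matrix.eq_intCast_nonsing_inv_mulVec_of_map_mulVec_eq {R σ : Type*} [CommRing R]
    [Fintype σ] [DecidableEq σ] {B : Matrix σ σ ℤ} (hB : IsUnit B.det) {v : σ → R}
    {b : σ → ℤ} (h : B.map (Int.cast : ℤ → R) *ᵥ v = fun i => (b i : R)) :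
    v = fun j => ((B⁻¹ *ᵥ b) j : R) := by
  have hunit : IsUnit (B.map (Int.cast : ℤ → R)) := by
    rw [isUnit_iff_isUnit_det, ← Int.cast_det]
    exact hB.map (Int.castRingHom R)
  refine mulVec_injective_of_isUnit hunit (h.trans (funext fun i => ?_))
  have := (Int.castRingHom R).map_mulVec B (B⁻¹ *ᵥ b) i
  rw [mulVec_mulVec, mul_nonsing_inv _ hB, one_mulVec] at this
  exact this

theorem TotallyUnimodular.isUnit_det_submatrix {m n k : ℕ} {A : Matrix (Fin m) (Fin n) ℤ}
    (hA : TotallyUnimodular A) {f : Fin k → Fin m} {g : Fin k → Fin n}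
    (hf : Function.Injective f) (hg : Function.Injective g)
    (hdet : ((A.map (Int.cast : ℤ → ℝ)).submatrix f g).det ≠ 0) :
    IsUnit (A.submatrix f g).det := by
  have hcast : ((A.submatrix f g).det : ℝ) = ((A.map (Int.cast : ℤ → ℝ)).submatrix f g).det := by
    rw [Int.cast_det, submatrix_map]
  rw [Int.isUnit_iff]
  rcases hA k f g hf hg with h | h | h
  · exact absurd h hdet
  · left; exact_mod_cast hcast.trans h
  · right; exact_mod_cast hcast.trans h

theorem TotallyUnimodular.exists_intCast_eq_of_mem_extremePoints {m n : ℕ}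
    {A : Matrix (Fin m) (Fin n) ℤ} (hA : TotallyUnimodular A) {d : Fin m → ℤ} {v : Fin n → ℝ}
    (hv : v ∈ {y | ∀ i, (A.map (Int.cast : ℤ → ℝ) *ᵥ y) i ≤ (d i : ℝ)}.extremePoints ℝ) :
    ∀ j, ∃ z : ℤ, v j = z := by
  set Ar := A.map (Int.cast : ℤ → ℝ)
  let Tight := {i // (Ar *ᵥ v) i = d i}
  have htight_ker : ∀ w, Ar.submatrix (Subtype.val : Tight → Fin m) id *ᵥ w = 0 → w = 0 :=
    fun w hw => eq_zero_of_mem_extremePoints_of_forall_tight_mulVec_eq_zero hv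
      fun i hi => congrFun hw ⟨i, hi⟩
  obtain ⟨f, hf, hdet⟩ := exists_injective_det_submatrix_ne_zero _ htight_ker
  have hB := hA.isUnit_det_submatrix (Subtype.val_injective.comp hf) Function.injective_id hdet
  have hv_int := eq_intCast_nonsing_inv_mulVec_of_map_mulVec_eq hB (b := fun k => d (f k).1)
    (funext fun k => (f k).2)
  exact fun j => ⟨_, congrFun hv_int j⟩

theorem lp_max_attained_at_vertex_and_integral_general {m n : ℕ}
    (A : Matrix (Fin m) (Fin n) ℤ) (d : Fin m → ℤ) (c : Fin n → ℝ)
    (P : Set (Fin n → ℝ))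
    (hP : P = {y | ∀ i, (A.map (Int.cast : ℤ → ℝ)).mulVec y i ≤ (d i : ℝ)})
    (hbdd : Bornology.IsBounded P)
    (ystar : Fin n → ℝ) (hystar : ystar ∈ P)
    (hmax : ∀ y ∈ P, Finset.univ.sum (fun j => c j * y j) ≤
      Finset.univ.sum (fun j => c j * ystar j)) :
    (∃ v ∈ P, (∀ y₁ ∈ P, ∀ y₂ ∈ P, ∀ t : ℝ, 0 < t → t < 1 →
        v = t • y₁ + (1 - t) • y₂ → y₁ = y₂) ∧
      Finset.univ.sum (fun j => c j * v j) =
        Finset.univ.sum (fun j => c j * ystar j)) ∧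
    (TotallyUnimodular A →
      ∃ v ∈ P, (∀ j, ∃ z : ℤ, v j = (z : ℝ)) ∧
        Finset.univ.sum (fun j => c j * v j) =
          Finset.univ.sum (fun j => c j * ystar j)) := by
  subst hP
  have hcompact := Metric.isCompact_of_isClosed_isBounded isClosed_setOf_forall_mulVec_le hbdd
  let objective : StrongDual ℝ (Fin n → ℝ) := ∑ j, c j • ContinuousLinearMap.proj j
  have hobjective (y : Fin n → ℝ) : objective y = ∑ j, c j * y j := by simp [objective]
  obtain ⟨v, hv, hval⟩ := hcompact.exists_mem_extremePoints_eq_of_isMaxOn objective hystar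
    (isMaxOn_iff.2 fun y hy => by simpa only [hobjective] using hmax y hy)
  rw [hobjective, hobjective] at hval
  exact ⟨⟨v, hv.1, fun y₁ hy₁ y₂ hy₂ t ht₀ ht₁ =>
      eq_of_mem_extremePoints_of_eq_smul_add_smul hv hy₁ hy₂ ht₀ ht₁, hval⟩,
    fun hA => ⟨v, hv.1, hA.exists_intCast_eq_of_mem_extremePoints hv, hval⟩⟩

/-- If the linear program `max {cᵀy : A y ≤ d}` over a nonempty bounded
polyhedron attains its maximum, then the maximum is attained at a vertex
(extreme point) of the polyhedron; consequently, if `A` is totally unimodular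
and `d` is integral, there is an integral optimal solution with the same
optimal value. -/
theorem lp_max_attained_at_vertex_and_integral {m n : ℕ}
    (A : Matrix (Fin m) (Fin n) ℤ) (d : Fin m → ℤ) (c : Fin n → ℝ)
    (P : Set (Fin n → ℝ))
    (hP : P = {y | ∀ i, (A.map (Int.cast : ℤ → ℝ)).mulVec y i ≤ (d i : ℝ)})
    (hne : P.Nonempty) (hbdd : Bornology.IsBounded P)
    (ystar : Fin n → ℝ) (hystar : ystar ∈ P)
    (hmax : ∀ y ∈ P, Finset.univ.sum (fun j => c j * y j) ≤
      Finset.univ.sum (fun j => c j * ystar j)) :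
    (∃ v ∈ P, (∀ y₁ ∈ P, ∀ y₂ ∈ P, ∀ t : ℝ, 0 < t → t < 1 →
        v = t • y₁ + (1 - t) • y₂ → y₁ = y₂) ∧
      Finset.univ.sum (fun j => c j * v j) =
        Finset.univ.sum (fun j => c j * ystar j)) ∧
    (TotallyUnimodular A →
      ∃ v ∈ P, (∀ j, ∃ z : ℤ, v j = (z : ℝ)) ∧
        Finset.univ.sum (fun j => c j * v j) =
          Finset.univ.sum (fun j => c j * ystar j)) :=
  lp_max_attained_at_vertex_and_integral_general A d c P hP hbdd ystar hystar hmax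
end

section
/- In Dijkstra's algorithm with multiple sources where each vertex is processed only the first time it is dequeued, if all edge weights are nonnegative then when a vertex is first dequeued its recorded cost equals the minimum cost of a path from any source to it. -/
/-- The minimum cost of a walk in the graph `adj` with weights `w` from some
source in `S` to `v`. -/
noncomputable def minSourceDist {V : Type*} (adj : V → V → Prop)
    (w : V → V → ℝ) (S : Finset V) (v : V) : ℝ :=
  sInf {c : ℝ | ∃ (k : ℕ) (γ : ℕ → V), γ 0 ∈ S ∧ γ k = v ∧
    (∀ i < k, adj (γ i) (γ (i + 1))) ∧
    c = ∑ i ∈ Finset.range k, w (γ i) (γ (i + 1))}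

/-- Correctness of lazy multi-source Dijkstra with nonnegative edge weights.
`seq : Fin T → V` is the order in which vertices are first dequeued and
processed, and `cost i` is the key recorded when `seq i` is first dequeued:
either `seq i` is a source with key `0`, or the key came from a relaxation of an
edge out of a previously processed vertex (`hrelax`).  The greedy (priority
queue) property says the dequeued key is no larger than the key of any entry of
a still-unprocessed vertex: `0` for an unprocessed source (`hsrc`), and
`cost j + w (seq j) v` for an unprocessed neighbour `v` of a processed vertex
`seq j` (`hmin`).  Then the recorded cost of every processed vertex equals the
minimum cost of a path from the sources to it. -/
theorem lazy_dijkstra_correct {V : Type*} [Fintype V] [DecidableEq V]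
    (adj : V → V → Prop) (w : V → V → ℝ) (hw : ∀ u v, 0 ≤ w u v)
    (S : Finset V) {T : ℕ} (seq : Fin T → V) (hinj : Function.Injective seq)
    (cost : Fin T → ℝ)
    (hrelax : ∀ i : Fin T, (seq i ∈ S ∧ cost i = 0) ∨
      ∃ j : Fin T, j < i ∧ adj (seq j) (seq i) ∧
        cost i = cost j + w (seq j) (seq i))
    (hsrc : ∀ i : Fin T, ∀ s ∈ S, (∀ j : Fin T, j < i → seq j ≠ s) →
      cost i ≤ 0)
    (hmin : ∀ i j : Fin T, j < i → ∀ v : V, adj (seq j) v →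
      (∀ k : Fin T, k < i → seq k ≠ v) → cost i ≤ cost j + w (seq j) v) :
    ∀ i : Fin T, cost i = minSourceDist adj w S (seq i) := by
  classical
  -- cost i is realized by some walk
  have memB : ∀ n : ℕ, ∀ i : Fin T, (i : ℕ) < n →
      ∃ (k : ℕ) (γ : ℕ → V), γ 0 ∈ S ∧ γ k = seq i ∧
        (∀ t < k, adj (γ t) (γ (t + 1))) ∧
        cost i = ∑ t ∈ Finset.range k, w (γ t) (γ (t + 1)) := by
    intro n
    induction n with
    | zero => intro i hi; omega
    | succ n IH =>
      intro i hi
      rcases hrelax i with ⟨hS, hc⟩ | ⟨j, hj, hadj, hc⟩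
      · exact ⟨0, fun _ => seq i, hS, rfl, fun t ht => by omega, by simpa using hc⟩
      · obtain ⟨k, γ, hγ0, hγk, hγadj, hγc⟩ := IH j (by
          have := (Fin.lt_iff_val_lt_val).mp hj; omega)
        refine ⟨k + 1, fun r => if r ≤ k then γ r else seq i, ?_, ?_, ?_, ?_⟩
        · simpa using hγ0
        · simp
        · intro t ht
          rcases lt_or_eq_of_le (Nat.lt_succ_iff.mp ht) with h | h
          · simp only [if_pos (le_of_lt h), if_pos (Nat.succ_le_of_lt h)]
            exact hγadj t h
          · subst h
            simp only [le_refl, if_pos, Nat.not_succ_le_self, if_neg, hγk]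
            simpa [hγk] using hadj
        · rw [Finset.sum_range_succ]
          have h1 : ∀ t ∈ Finset.range k,
              w (if t ≤ k then γ t else seq i) (if t + 1 ≤ k then γ (t + 1) else seq i)
                = w (γ t) (γ (t + 1)) := by
            intro t ht
            rw [Finset.mem_range] at ht
            rw [if_pos (le_of_lt ht), if_pos (Nat.succ_le_of_lt ht)]
          rw [Finset.sum_congr rfl h1]
          beta_reduce
          rw [if_pos (le_refl k),
            if_neg (by omega : ¬ k + 1 ≤ k), hγk, hc, hγc]
  -- cost i is a lower bound on all walk costs
  have lbB : ∀ n : ℕ, ∀ i : Fin T, (i : ℕ) < n →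
      ∀ (k : ℕ) (γ : ℕ → V), γ 0 ∈ S → γ k = seq i →
        (∀ t < k, adj (γ t) (γ (t + 1))) →
        cost i ≤ ∑ t ∈ Finset.range k, w (γ t) (γ (t + 1)) := by
    intro n
    induction n with
    | zero => intro i hi; omega
    | succ n IH =>
      intro i hi k γ hγ0 hγk hγadj
      have hsum_nonneg : ∀ a b : ℕ, a ≤ b →
          ∑ t ∈ Finset.range a, w (γ t) (γ (t + 1))
            ≤ ∑ t ∈ Finset.range b, w (γ t) (γ (t + 1)) := by
        intro a b hab
        apply Finset.sum_le_sum_of_subset_of_nonneg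
        · exact Finset.range_subset_range.mpr hab
        · intro t _ _; exact hw _ _
      -- find the first unprocessed vertex on the walk
      have hQk : ∀ j : Fin T, j < i → seq j ≠ γ k := by
        intro j hj heq
        rw [hγk] at heq
        exact absurd (hinj heq) (ne_of_lt hj)
      have hex : ∃ m, ∀ j : Fin T, j < i → seq j ≠ γ m := ⟨k, hQk⟩
      obtain ⟨m, hmspec, hmle, hmmin⟩ :
          ∃ m, (∀ j : Fin T, j < i → seq j ≠ γ m) ∧ m ≤ k ∧
            ∀ t, t < m → ¬ ∀ j : Fin T, j < i → seq j ≠ γ t :=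
        ⟨Nat.find hex, Nat.find_spec hex, Nat.find_le hQk,
          fun t ht => Nat.find_min hex ht⟩
      rcases Nat.eq_zero_or_pos m with h0 | hpos
      · -- γ 0 is an unprocessed source
        subst h0
        have : cost i ≤ 0 := hsrc i (γ 0) hγ0 hmspec
        calc cost i ≤ 0 := this
          _ ≤ _ := Finset.sum_nonneg fun t _ => hw _ _
      · obtain ⟨t, rfl⟩ : ∃ t, m = t + 1 := ⟨m - 1, by omega⟩
        have htlt : ¬ ∀ j : Fin T, j < i → seq j ≠ γ t := hmmin t (by omega)
        push_neg at htlt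
        obtain ⟨j, hj, hjeq⟩ := htlt
        have htk : t < k := by omega
        have hadj : adj (seq j) (γ (t + 1)) := by rw [hjeq]; exact hγadj t htk
        have h1 : cost i ≤ cost j + w (seq j) (γ (t + 1)) :=
          hmin i j hj (γ (t + 1)) hadj (fun k hk => hmspec k hk)
        have h2 : cost j ≤ ∑ r ∈ Finset.range t, w (γ r) (γ (r + 1)) :=
          IH j (by have := (Fin.lt_iff_val_lt_val).mp hj; omega) t γ hγ0 hjeq.symm
            (fun r hr => hγadj r (by omega))
        have h3 : w (seq j) (γ (t + 1)) = w (γ t) (γ (t + 1)) := by rw [hjeq]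
        calc cost i ≤ cost j + w (seq j) (γ (t + 1)) := h1
          _ ≤ (∑ r ∈ Finset.range t, w (γ r) (γ (r + 1))) + w (γ t) (γ (t + 1)) := by
              rw [h3]; linarith
          _ = ∑ r ∈ Finset.range (t + 1), w (γ r) (γ (r + 1)) :=
              (Finset.sum_range_succ _ _).symm
          _ ≤ _ := hsum_nonneg (t + 1) k (by omega)
  intro i
  have hmem := memB ((i : ℕ) + 1) i (by omega)
  obtain ⟨k, γ, hγ0, hγk, hγadj, hγc⟩ := hmem
  have hmemS : cost i ∈ {c : ℝ | ∃ (k : ℕ) (γ : ℕ → V), γ 0 ∈ S ∧ γ k = seq i ∧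
      (∀ t < k, adj (γ t) (γ (t + 1))) ∧
      c = ∑ t ∈ Finset.range k, w (γ t) (γ (t + 1))} := ⟨k, γ, hγ0, hγk, hγadj, hγc⟩
  have hlb : ∀ c ∈ {c : ℝ | ∃ (k : ℕ) (γ : ℕ → V), γ 0 ∈ S ∧ γ k = seq i ∧
      (∀ t < k, adj (γ t) (γ (t + 1))) ∧
      c = ∑ t ∈ Finset.range k, w (γ t) (γ (t + 1))}, cost i ≤ c := by
    rintro c ⟨k', γ', h0', hk', hadj', rfl⟩
    exact lbB ((i : ℕ) + 1) i (by omega) k' γ' h0' hk' hadj'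
  exact (IsLeast.csInf_eq ⟨hmemS, hlb⟩).symm
end
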